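/- arXiv:1003.0731 — 2 statements merged into one kernel-verified Lean document; each statement's English description precedes it below -/
import Mathlib

section
/- Let α = (1 2 3 5 4), β = (1 2)(3 4)(5), τ = (1 2)(3 4)(5) in S₅. Then τατ⁻¹ = α⁻¹ and τβτ⁻¹ = β⁻¹, the number of letters fixed by τ is 1, by τα is 1, and by τβ is 5, so n + n_a + n_b = 7. -/
open Equiv Finset

/-- For `α = (1 2 3 5 4)`, `β = τ = (1 2)(3 4)` in `S₅` (letters
`0,…,4` for `1,…,5`): `τατ⁻¹ = α⁻¹`, `τβτ⁻¹ = β⁻¹`, and the numbers of fixed points of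
`τ`, `τα`, `τβ` are `1`, `1`, `5` respectively, so `n + n_a + n_b = 7`. -/
theorem example_hyperelliptic_genus_three
    (α β τ : Equiv.Perm (Fin 5))
    (hα : α = Equiv.swap 0 1 * Equiv.swap 1 2 * Equiv.swap 2 4 * Equiv.swap 4 3)
    (hβ : β = Equiv.swap 0 1 * Equiv.swap 2 3)
    (hτ : τ = Equiv.swap 0 1 * Equiv.swap 2 3) :
    τ * α * τ⁻¹ = α⁻¹ ∧
    τ * β * τ⁻¹ = β⁻¹ ∧
    (univ.filter fun x : Fin 5 => τ x = x).card = 1 ∧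
    (univ.filter fun x : Fin 5 => (τ * α) x = x).card = 1 ∧
    (univ.filter fun x : Fin 5 => (τ * β) x = x).card = 5 ∧
    (univ.filter fun x : Fin 5 => τ x = x).card +
      (univ.filter fun x : Fin 5 => (τ * α) x = x).card +
      (univ.filter fun x : Fin 5 => (τ * β) x = x).card = 7 := by
  subst hα hβ hτ
  decide
end

section
/- Let α = (1 3 5 4)(2) and β = (1 2)(3 4)(5) in S₅. Then the commutator β⁻¹α⁻¹βα is a 5-cycle and ⟨α, β⟩ acts transitively on {1,…,5}. -/
set_option maxRecDepth 4000
open Equiv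

/-- For `α = (1 3 5 4)(2)` and `β = (1 2)(3 4)` in `S₅` (letters `0,…,4`
for `1,…,5`), the commutator `β⁻¹α⁻¹βα` is a 5-cycle and `⟨α, β⟩` acts transitively. -/
theorem example_component_four
    (α β : Equiv.Perm (Fin 5))
    (hα : α = Equiv.swap 0 2 * Equiv.swap 2 4 * Equiv.swap 4 3)
    (hβ : β = Equiv.swap 0 1 * Equiv.swap 2 3) :
    (β⁻¹ * α⁻¹ * β * α).IsCycle ∧
    (β⁻¹ * α⁻¹ * β * α).support.card = 5 ∧
    (∀ x y : Fin 5, ∃ σ ∈ Subgroup.closure ({α, β} : Set (Equiv.Perm (Fin 5))),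
      σ x = y) := by
  subst hα hβ
  set c := ((Equiv.swap 0 1 * Equiv.swap 2 3 : Perm (Fin 5)))⁻¹ *
      (Equiv.swap 0 2 * Equiv.swap 2 4 * Equiv.swap 4 3 : Perm (Fin 5))⁻¹ *
      (Equiv.swap 0 1 * Equiv.swap 2 3) *
      (Equiv.swap 0 2 * Equiv.swap 2 4 * Equiv.swap 4 3) with hc
  have hord : orderOf c = 5 := by
    have : Fact (Nat.Prime 5) := ⟨by norm_num⟩
    apply orderOf_eq_prime
    · decide
    · decide
  have hcard : c.support.card = 5 := by decide
  refine ⟨?_, hcard, ?_⟩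
  · apply Equiv.Perm.isCycle_of_prime_order (by rw [hord]; norm_num)
    rw [hord, hcard]; norm_num
  · have hmemα : (Equiv.swap 0 2 * Equiv.swap 2 4 * Equiv.swap 4 3 : Perm (Fin 5)) ∈
        Subgroup.closure ({Equiv.swap 0 2 * Equiv.swap 2 4 * Equiv.swap 4 3,
          Equiv.swap 0 1 * Equiv.swap 2 3} : Set (Perm (Fin 5))) :=
      Subgroup.subset_closure (Or.inl rfl)
    have hmemβ : (Equiv.swap 0 1 * Equiv.swap 2 3 : Perm (Fin 5)) ∈
        Subgroup.closure ({Equiv.swap 0 2 * Equiv.swap 2 4 * Equiv.swap 4 3,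
          Equiv.swap 0 1 * Equiv.swap 2 3} : Set (Perm (Fin 5))) :=
      Subgroup.subset_closure (Or.inr rfl)
    have hmemc : c ∈ Subgroup.closure ({Equiv.swap 0 2 * Equiv.swap 2 4 * Equiv.swap 4 3,
          Equiv.swap 0 1 * Equiv.swap 2 3} : Set (Perm (Fin 5))) := by
      rw [hc]
      exact mul_mem (mul_mem (mul_mem (inv_mem hmemβ) (inv_mem hmemα)) hmemβ) hmemα
    have key : ∀ x : Fin 5, ∃ n : Fin 5, (c ^ (n : ℕ)) 0 = x := by decide
    intro x y
    obtain ⟨m, hm⟩ := key x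
    obtain ⟨n, hn⟩ := key y
    refine ⟨c ^ (n : ℕ) * (c ^ (m : ℕ))⁻¹, mul_mem (pow_mem hmemc _) (inv_mem (pow_mem hmemc _)), ?_⟩
    have : (c ^ (m : ℕ))⁻¹ x = 0 := by rw [← hm]; simp
    simp [Perm.mul_apply, this, hn]
end
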